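/- Let A be a real m × n matrix, b ∈ ℝᵐ, μ > 0, and define on ℝⁿ the functions f(x) = (1/2)·‖A x − b‖₂² and g(x) = μ·‖x‖₂, with L = ‖Aᵀ A‖ the ℓ²-operator norm of Aᵀ A assumed positive. Let t satisfy 0 < t ≤ 1/L, let x₀ ∈ ℝⁿ, and let (xₖ) be the sequence with x 0 = x₀ given by the explicit update: yₖ = xₖ − t·Aᵀ(A xₖ − b), and x(k+1) = 0 if ‖yₖ‖₂ ≤ t·μ, otherwise x(k+1) = (1 − t·μ/‖yₖ‖₂)·yₖ. Then for every positive integer k and every xm ∈ ℝⁿ, (f + g)(xₖ) − (f + g)(xm) ≤ (1/(2·k·t))·‖x₀ − xm‖². -/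

import Mathlib

open Matrix
open scoped RealInnerProductSpace

section Abstract
variable {E : Type*} [NormedAddCommGroup E] [InnerProductSpace ℝ E]

lemma pg_step (t : ℝ) (ht : 0 < t) (fx fxp fz gxp gz : ℝ) (d x xp z : E)
    (hconv : fx + ⟪d, z - x⟫ ≤ fz)
    (hsmooth : 2*t*fxp ≤ 2*t*(fx + ⟪d, xp - x⟫) + ‖xp - x‖^2)
    (hprox : t * gxp + ⟪(x - t•d) - xp, z - xp⟫ ≤ t * gz) :
    2*t*(fxp + gxp) ≤ 2*t*(fz + gz) + (‖x - z‖^2 - ‖xp - z‖^2) := by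
  have e1 : ‖x - z‖^2 - ‖xp - z‖^2 = ‖xp - x‖^2 - 2*⟪x - xp, z - xp⟫ := by
    have h1 := @norm_sub_sq_real E _ _ x z
    have h2 := @norm_sub_sq_real E _ _ xp z
    have h3 := @norm_sub_sq_real E _ _ xp x
    have h4 : ⟪x - xp, z - xp⟫ = ⟪x,z⟫ - ⟪x,xp⟫ - ⟪xp,z⟫ + ⟪xp,xp⟫ := by
      simp [inner_sub_left, inner_sub_right]; ring
    have h5 : ⟪xp, x⟫ = ⟪x, xp⟫ := real_inner_comm _ _
    have h6 : ‖xp‖^2 = ⟪xp, xp⟫ := (real_inner_self_eq_norm_sq xp).symm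
    nlinarith [h1, h2, h3]
  have e2 : ⟪(x - t•d) - xp, z - xp⟫ = ⟪x - xp, z - xp⟫ - t*⟪d, z - xp⟫ := by
    have : (x - t•d) - xp = (x - xp) - t•d := by abel
    rw [this, inner_sub_left, real_inner_smul_left]
  have e3 : ⟪d, z - x⟫ = ⟪d, z - xp⟫ + ⟪d, xp - x⟫ := by
    rw [inner_sub_right, inner_sub_right, inner_sub_right]; ring
  have hc2 : 2*t*(fx + ⟪d, z - x⟫) ≤ 2*t*fz :=
    mul_le_mul_of_nonneg_left hconv (by positivity)
  rw [e2] at hprox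
  rw [e1]
  nlinarith [hprox, hsmooth, hc2, e3]

lemma shrink_prox (t μ : ℝ) (ht : 0 < t) (hμ : 0 < μ) (y z : E)
    (xp : E) (hxp : xp = if ‖y‖ ≤ t*μ then 0 else (1 - t*μ/‖y‖) • y) :
    t * (μ*‖xp‖) + ⟪y - xp, z - xp⟫ ≤ t * (μ*‖z‖) := by
  by_cases h : ‖y‖ ≤ t*μ
  · rw [hxp, if_pos h]
    simp only [norm_zero, sub_zero, mul_zero, zero_add]
    calc ⟪y, z⟫ ≤ ‖y‖ * ‖z‖ := real_inner_le_norm y z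
      _ ≤ (t*μ) * ‖z‖ := mul_le_mul_of_nonneg_right h (norm_nonneg z)
      _ = t * (μ*‖z‖) := by ring
  · rw [hxp, if_neg h]
    push_neg at h
    have hy0 : 0 < ‖y‖ := lt_trans (by positivity) h
    have hfac : 0 ≤ 1 - t*μ/‖y‖ := by
      rw [sub_nonneg, div_le_one hy0]; exact le_of_lt h
    have hnxp : ‖(1 - t*μ/‖y‖) • y‖ = ‖y‖ - t*μ := by
      rw [norm_smul, Real.norm_eq_abs, abs_of_nonneg hfac]
      field_simp
    have hysub : y - (1 - t*μ/‖y‖) • y = (t*μ/‖y‖) • y := by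
      rw [sub_smul, one_smul]; abel
    rw [hnxp, hysub, real_inner_smul_left, inner_sub_right, real_inner_smul_right,
      real_inner_self_eq_norm_sq]
    have hinner : ⟪y, z⟫ ≤ ‖y‖ * ‖z‖ := real_inner_le_norm y z
    have e : t*μ/‖y‖ * (⟪y,z⟫ - (1 - t*μ/‖y‖) * ‖y‖^2)
        = (t*μ/‖y‖) * ⟪y,z⟫ - t*μ*(‖y‖ - t*μ) := by
      field_simp
    rw [e]
    have : (t*μ/‖y‖) * ⟪y,z⟫ ≤ t*(μ*‖z‖) := by
      have h1 : (t*μ/‖y‖) * ⟪y,z⟫ ≤ (t*μ/‖y‖) * (‖y‖*‖z‖) :=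
        mul_le_mul_of_nonneg_left hinner (by positivity)
      calc (t*μ/‖y‖) * ⟪y,z⟫ ≤ (t*μ/‖y‖) * (‖y‖*‖z‖) := h1
        _ = t*(μ*‖z‖) := by field_simp
    linarith
end Abstract

/-- Matrix–vector multiplication as a map between Euclidean spaces. -/
noncomputable def mulVecE {m n : ℕ} (A : Matrix (Fin m) (Fin n) ℝ)
    (x : EuclideanSpace ℝ (Fin n)) : EuclideanSpace ℝ (Fin m) :=
  WithLp.toLp 2 (A.mulVec x)

/-- The ℓ²-operator norm of a square matrix. -/
noncomputable def l2OpNorm {n : ℕ} (B : Matrix (Fin n) (Fin n) ℝ) : ℝ :=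
  ‖LinearMap.toContinuousLinearMap (Matrix.toEuclideanLin B)‖

lemma mulVecE_adjoint {m n : ℕ} (A : Matrix (Fin m) (Fin n) ℝ)
    (u : EuclideanSpace ℝ (Fin n)) (v : EuclideanSpace ℝ (Fin m)) :
    ⟪mulVecE A u, v⟫ = ⟪u, mulVecE Aᵀ v⟫ := by
  simp [mulVecE, PiLp.inner_apply, RCLike.inner_apply, mulVec, dotProduct,
    Finset.mul_sum, Finset.sum_mul]
  rw [Finset.sum_comm]
  simp [mul_comm, mul_left_comm, mul_assoc]

lemma mulVecE_bound {n : ℕ} (B : Matrix (Fin n) (Fin n) ℝ) (v : EuclideanSpace ℝ (Fin n)) :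
    ‖mulVecE B v‖ ≤ l2OpNorm B * ‖v‖ := by
  have h := (LinearMap.toContinuousLinearMap (Matrix.toEuclideanLin B)).le_opNorm v
  rw [LinearMap.coe_toContinuousLinearMap'] at h
  rw [Matrix.toEuclideanLin_apply] at h
  exact h

lemma mulVecE_sub {m n : ℕ} (A : Matrix (Fin m) (Fin n) ℝ)
    (u v : EuclideanSpace ℝ (Fin n)) :
    mulVecE A (u - v) = mulVecE A u - mulVecE A v := by
  ext i
  simp [mulVecE, mulVec, dotProduct, mul_sub, Finset.sum_sub_distrib]

lemma mulVecE_mul {m n : ℕ} (A : Matrix (Fin m) (Fin n) ℝ)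
    (v : EuclideanSpace ℝ (Fin n)) :
    mulVecE (Aᵀ * A) v = mulVecE Aᵀ (mulVecE A v) := by
  simp only [mulVecE, WithLp.ofLp_toLp, ← Matrix.mulVec_mulVec]

/-- sublinear convergence of the explicit proximal gradient (block
shrinkage) iteration for the ℓ²-regularized least-squares problem
`min (1/2)‖Ax - b‖² + μ‖x‖₂`. -/
theorem l2_reg_ls_pg_converge {m n : ℕ}
    (A : Matrix (Fin m) (Fin n) ℝ) (b : EuclideanSpace ℝ (Fin m)) (μ : ℝ) (hμ : 0 < μ)
    (hL : 0 < l2OpNorm (Aᵀ * A))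
    (t : ℝ) (ht : 0 < t) (ht' : t ≤ 1 / l2OpNorm (Aᵀ * A))
    (x₀ : EuclideanSpace ℝ (Fin n)) (x y : ℕ → EuclideanSpace ℝ (Fin n))
    (hx0 : x 0 = x₀)
    (hy : ∀ k : ℕ, y k = x k - t • mulVecE Aᵀ (mulVecE A (x k) - b))
    (hupdate : ∀ k : ℕ,
      x (k + 1) = if ‖y k‖ ≤ t * μ then 0 else (1 - t * μ / ‖y k‖) • y k) :
    ∀ (k : ℕ+) (xm : EuclideanSpace ℝ (Fin n)),
      ((1 / 2) * ‖mulVecE A (x k) - b‖ ^ 2 + μ * ‖x k‖)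
          - ((1 / 2) * ‖mulVecE A xm - b‖ ^ 2 + μ * ‖xm‖)
        ≤ 1 / (2 * (k : ℝ) * t) * ‖x₀ - xm‖ ^ 2 := by
  set fE : EuclideanSpace ℝ (Fin n) → ℝ := fun u => (1/2) * ‖mulVecE A u - b‖^2 with hfE
  set gE : EuclideanSpace ℝ (Fin n) → ℝ := fun u => μ * ‖u‖ with hgE
  set grad : EuclideanSpace ℝ (Fin n) → EuclideanSpace ℝ (Fin n) :=
    fun u => mulVecE Aᵀ (mulVecE A u - b) with hgrad
  have hexp : ∀ u z : EuclideanSpace ℝ (Fin n),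
      fE z = fE u + ⟪grad u, z - u⟫ + (1/2) * ‖mulVecE A (z - u)‖^2 := by
    intro u z
    have hsplit : mulVecE A z - b = (mulVecE A u - b) + mulVecE A (z - u) := by
      rw [mulVecE_sub]; abel
    have hie : ⟪mulVecE A u - b, mulVecE A (z - u)⟫ = ⟪grad u, z - u⟫ := by
      simp only [hgrad]
      rw [real_inner_comm (mulVecE A (z-u)) (mulVecE A u - b), mulVecE_adjoint,
        real_inner_comm]
    simp only [hfE]
    rw [hsplit, @norm_add_sq_real, hie]
    ring
  have hconv : ∀ u z : EuclideanSpace ℝ (Fin n), fE u + ⟪grad u, z - u⟫ ≤ fE z := by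
    intro u z
    rw [hexp u z]
    have : 0 ≤ (1/2) * ‖mulVecE A (z - u)‖^2 := by positivity
    linarith
  have hAv : ∀ v : EuclideanSpace ℝ (Fin n), ‖mulVecE A v‖^2 ≤ (1/t) * ‖v‖^2 := by
    intro v
    have h1 : ‖mulVecE A v‖^2 = ⟪v, mulVecE (Aᵀ * A) v⟫ := by
      rw [mulVecE_mul, ← mulVecE_adjoint A v (mulVecE A v)]
      exact (real_inner_self_eq_norm_sq _).symm
    have h2 : ⟪v, mulVecE (Aᵀ * A) v⟫ ≤ ‖v‖ * ‖mulVecE (Aᵀ * A) v‖ := real_inner_le_norm _ _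
    have h3 := mulVecE_bound (Aᵀ * A) v
    have hL' : l2OpNorm (Aᵀ * A) ≤ 1/t := by
      rw [le_div_iff₀ ht]
      have := (le_div_iff₀ hL).mp ht'
      nlinarith [this]
    nlinarith [norm_nonneg v, norm_nonneg (mulVecE (Aᵀ * A) v)]
  have hsmooth : ∀ u z : EuclideanSpace ℝ (Fin n),
      2*t*(fE z) ≤ 2*t*(fE u + ⟪grad u, z - u⟫) + ‖z - u‖^2 := by
    intro u z
    have h2 := hAv (z - u)
    have he : 2*t*(fE z) = 2*t*(fE u + ⟪grad u, z - u⟫) + t * ‖mulVecE A (z - u)‖^2 := by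
      rw [hexp u z]; ring
    rw [he]
    have hb : t * ‖mulVecE A (z - u)‖^2 ≤ t * ((1/t) * ‖z - u‖^2) :=
      mul_le_mul_of_nonneg_left h2 (le_of_lt ht)
    have ht0 : t ≠ 0 := ne_of_gt ht
    rw [← mul_assoc, mul_one_div, div_self ht0, one_mul] at hb
    linarith
  have hstep : ∀ (k : ℕ) (z : EuclideanSpace ℝ (Fin n)),
      2*t*(fE (x (k+1)) + gE (x (k+1))) ≤ 2*t*(fE z + gE z)
        + (‖x k - z‖^2 - ‖x (k+1) - z‖^2) := by
    intro k z
    apply pg_step t ht (fE (x k)) (fE (x (k+1))) (fE z) (gE (x (k+1))) (gE z)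
      (grad (x k)) (x k) (x (k+1)) z
    · exact hconv (x k) z
    · exact hsmooth (x k) (x (k+1))
    · have hy' : x k - t • grad (x k) = y k := by simp only [hgrad]; rw [hy k]
      rw [hy']
      exact shrink_prox t μ ht hμ (y k) z (x (k+1)) (hupdate k)
  have hmono : ∀ k : ℕ, fE (x (k+1)) + gE (x (k+1)) ≤ fE (x k) + gE (x k) := by
    intro k
    have := hstep k (x k)
    simp only [sub_self, norm_zero] at this
    nlinarith [sq_nonneg (‖x (k+1) - x k‖)]
  intro k xm
  have hsum : ∀ K : ℕ, (K : ℝ) * (2*t*(fE (x K) + gE (x K) - (fE xm + gE xm)))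
      ≤ ‖x 0 - xm‖^2 - ‖x K - xm‖^2 := by
    intro K
    induction K with
    | zero => simp
    | succ K ih =>
      have h1 := hstep K xm
      have h2 : fE (x (K+1)) + gE (x (K+1)) ≤ fE (x K) + gE (x K) := hmono K
      have h3 : (K:ℝ) * (2*t*(fE (x (K+1)) + gE (x (K+1)) - (fE xm + gE xm)))
          ≤ (K:ℝ) * (2*t*(fE (x K) + gE (x K) - (fE xm + gE xm))) := by
        apply mul_le_mul_of_nonneg_left _ (Nat.cast_nonneg K)
        nlinarith [ht]
      push_cast
      nlinarith [h1, ih, h3]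
  have hK := hsum (k : ℕ)
  have hk0 : (0:ℝ) < (k : ℝ) := by exact_mod_cast k.pos
  have hnn : (0:ℝ) ≤ ‖x (k:ℕ) - xm‖^2 := by positivity
  have hfin : (k:ℝ) * (2*t*(fE (x (k:ℕ)) + gE (x (k:ℕ)) - (fE xm + gE xm)))
      ≤ ‖x₀ - xm‖^2 := by
    rw [← hx0]; linarith
  have h2kt : (0:ℝ) < 2 * (k:ℝ) * t := by positivity
  rw [show (1:ℝ) / (2 * (k:ℝ) * t) * ‖x₀ - xm‖^2 = ‖x₀ - xm‖^2 / (2 * (k:ℝ) * t) by ring]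
  rw [le_div_iff₀ h2kt]
  calc ((1 / 2) * ‖mulVecE A (x (k:ℕ)) - b‖ ^ 2 + μ * ‖x (k:ℕ)‖
          - ((1 / 2) * ‖mulVecE A xm - b‖ ^ 2 + μ * ‖xm‖)) * (2 * (k:ℝ) * t)
      = (k:ℝ) * (2*t*(fE (x (k:ℕ)) + gE (x (k:ℕ)) - (fE xm + gE xm))) := by
        simp only [hfE, hgE]; ring
    _ ≤ ‖x₀ - xm‖^2 := hfin
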